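/- Let Δ be a real symmetric positive semidefinite N×N matrix, n ≥ 1, and for each natural number i set P_i = (I + (Δ/2^i)^n)^{-1}. Then for every i ≥ 1 the band-pass filter P_i − P_{i−1} is a (symmetric) positive semidefinite matrix. -/
import Mathlib

open Matrix

/-- Conjugation by a unitary commutes with powers. -/
lemma unitary_conj_pow {N : ℕ} {V D : Matrix (Fin N) (Fin N) ℝ}
    (h1 : V * Vᴴ = 1) (h2 : Vᴴ * V = 1) (k : ℕ) :
    (V * D * Vᴴ) ^ k = V * D ^ k * Vᴴ := by
  induction k with
  | zero => rw [pow_zero, pow_zero, mul_one, h1]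
  | succ k ih =>
      rw [pow_succ, ih, pow_succ]
      calc V * D ^ k * Vᴴ * (V * D * Vᴴ)
          = V * D ^ k * (Vᴴ * V) * D * Vᴴ := by noncomm_ring
        _ = V * (D ^ k * D) * Vᴴ := by rw [h2]; noncomm_ring

/-- Explicit diagonalization of the low-pass filter. -/
lemma lowpass_formula {N : ℕ} {Δ : Matrix (Fin N) (Fin N) ℝ}
    (hΔ : Δ.PosSemidef) (n : ℕ) (c : ℝ) (hc : 0 ≤ c) :
    (1 + (c • Δ) ^ n)⁻¹ =
      (hΔ.1.eigenvectorUnitary : Matrix (Fin N) (Fin N) ℝ) *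
        diagonal (fun j => (1 + (c * hΔ.1.eigenvalues j) ^ n)⁻¹) *
        (hΔ.1.eigenvectorUnitary : Matrix (Fin N) (Fin N) ℝ)ᴴ := by
  set V : Matrix (Fin N) (Fin N) ℝ := (hΔ.1.eigenvectorUnitary : Matrix (Fin N) (Fin N) ℝ)
  have h1 : V * Vᴴ = 1 := by
    simpa [V, Matrix.star_eq_conjTranspose] using
      (Unitary.mul_star_self_of_mem (hΔ.1.eigenvectorUnitary).2)
  have h2 : Vᴴ * V = 1 := by
    simpa [V, Matrix.star_eq_conjTranspose] using
      (Unitary.star_mul_self_of_mem (hΔ.1.eigenvectorUnitary).2)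
  have hΔeq : Δ = V * diagonal (fun j => hΔ.1.eigenvalues j) * Vᴴ := by
    simpa [Matrix.star_eq_conjTranspose, Function.comp] using hΔ.1.spectral_theorem
  have hpos : ∀ j, (0:ℝ) < 1 + (c * hΔ.1.eigenvalues j) ^ n := fun j => by
    have := pow_nonneg (mul_nonneg hc (hΔ.eigenvalues_nonneg j)) n
    linarith
  have key : 1 + (c • Δ) ^ n =
      V * diagonal (fun j => 1 + (c * hΔ.1.eigenvalues j) ^ n) * Vᴴ := by
    have hsmul : c • Δ = V * diagonal (fun j => c * hΔ.1.eigenvalues j) * Vᴴ := by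
      conv_lhs => rw [hΔeq]
      rw [show (fun j => c * hΔ.1.eigenvalues j) = c • (fun j => hΔ.1.eigenvalues j) from rfl,
        Matrix.diagonal_smul, Matrix.mul_smul, Matrix.smul_mul]
    rw [hsmul, unitary_conj_pow h1 h2, Matrix.diagonal_pow]
    have hone : (1 : Matrix (Fin N) (Fin N) ℝ) = V * 1 * Vᴴ := by rw [mul_one, h1]
    conv_lhs => rw [hone]
    rw [← Matrix.add_mul, ← Matrix.mul_add, ← Matrix.diagonal_one, Matrix.diagonal_add]
    rfl
  rw [key]
  apply Matrix.inv_eq_right_inv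
  calc V * diagonal (fun j => 1 + (c * hΔ.1.eigenvalues j) ^ n) * Vᴴ *
        (V * diagonal (fun j => (1 + (c * hΔ.1.eigenvalues j) ^ n)⁻¹) * Vᴴ)
      = V * diagonal (fun j => 1 + (c * hΔ.1.eigenvalues j) ^ n) * (Vᴴ * V) *
        diagonal (fun j => (1 + (c * hΔ.1.eigenvalues j) ^ n)⁻¹) * Vᴴ := by noncomm_ring
    _ = V * (diagonal (fun j => 1 + (c * hΔ.1.eigenvalues j) ^ n) *
        diagonal (fun j => (1 + (c * hΔ.1.eigenvalues j) ^ n)⁻¹)) * Vᴴ := by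
          rw [h2]; noncomm_ring
    _ = 1 := by
        rw [Matrix.diagonal_mul_diagonal]
        have : (fun j => (1 + (c * hΔ.1.eigenvalues j) ^ n) *
            (1 + (c * hΔ.1.eigenvalues j) ^ n)⁻¹) = fun _ => (1:ℝ) := by
          funext j; exact mul_inv_cancel₀ (hpos j).ne'
        rw [this, Matrix.diagonal_one, mul_one, h1]

/-- For `i ≥ 1`, the band-pass filter `P_i − P_{i−1}` built from the low-pass
spectral filters `P_i = (I + (Δ / 2^i)^n)⁻¹` is (symmetric) positive
semidefinite, i.e. `P_{i−1} ⪯ P_i` in the Loewner order. -/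
theorem bandpass_filter_posSemidef
    (N : ℕ) (Δ : Matrix (Fin N) (Fin N) ℝ)
    (hΔsymm : Δ.IsSymm) (hΔ : Δ.PosSemidef)
    (n : ℕ) (hn : 1 ≤ n)
    (P : ℕ → Matrix (Fin N) (Fin N) ℝ)
    (hP : ∀ i, P i = (1 + (((2 : ℝ) ^ i)⁻¹ • Δ) ^ n)⁻¹) :
    ∀ i, 1 ≤ i → (P i - P (i - 1)).PosSemidef := by
  intro i hi
  set V : Matrix (Fin N) (Fin N) ℝ := (hΔ.1.eigenvectorUnitary : Matrix (Fin N) (Fin N) ℝ)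
  have hc : ∀ k : ℕ, (0:ℝ) ≤ ((2:ℝ) ^ k)⁻¹ := fun k =>
    inv_nonneg.mpr (by positivity)
  rw [hP i, hP (i-1), lowpass_formula hΔ n _ (hc i), lowpass_formula hΔ n _ (hc (i-1))]
  rw [← Matrix.sub_mul, ← Matrix.mul_sub, Matrix.diagonal_sub]
  refine (Matrix.posSemidef_diagonal_iff.mpr ?_).mul_mul_conjTranspose_same V
  intro j
  set lam := hΔ.1.eigenvalues j with hlam
  have hlamnn : 0 ≤ lam := hΔ.eigenvalues_nonneg j
  have hle : ((2:ℝ) ^ i)⁻¹ * lam ≤ ((2:ℝ) ^ (i-1))⁻¹ * lam := by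
    apply mul_le_mul_of_nonneg_right _ hlamnn
    apply inv_anti₀ (by positivity)
    exact pow_le_pow_right₀ one_le_two (Nat.sub_le i 1)
  have ha : (0:ℝ) ≤ (((2:ℝ) ^ i)⁻¹ * lam) ^ n :=
    pow_nonneg (mul_nonneg (hc i) hlamnn) n
  have hpow : (((2:ℝ) ^ i)⁻¹ * lam) ^ n ≤ (((2:ℝ) ^ (i-1))⁻¹ * lam) ^ n :=
    pow_le_pow_left₀ (mul_nonneg (hc i) hlamnn) hle n
  have h1 : (0:ℝ) < 1 + (((2:ℝ) ^ i)⁻¹ * lam) ^ n := by linarith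
  have := inv_anti₀ h1 (by linarith : 1 + (((2:ℝ) ^ i)⁻¹ * lam) ^ n
      ≤ 1 + (((2:ℝ) ^ (i-1))⁻¹ * lam) ^ n)
  simpa [sub_nonneg] using this
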